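/- arXiv:2206.10854 — 2 statements merged into one kernel-verified Lean document; each statement's English description precedes it below -/
import Mathlib

section
/- Let P be a homogeneous polynomial of degree d in n variables with Δ²P = 0, and define P† = P - (ρ/(2d + n - 4))·ΔP where ρ = (1/2)Σ x_i², assuming 2d + n - 4 ≠ 0. Then P† is harmonic: ΔP† = 0. -/
open MvPolynomial

noncomputable section

/-- The Laplacian Δ = Σⱼ ∂ⱼ² on polynomials in n variables. -/
noncomputable def lapP {n : ℕ} (P : MvPolynomial (Fin n) ℂ) : MvPolynomial (Fin n) ℂ :=
  ∑ j : Fin n, pderiv j (pderiv j P)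

/-- ρ = (1/2) Σᵢ xᵢ² as a polynomial. -/
noncomputable def rhoP (n : ℕ) : MvPolynomial (Fin n) ℂ :=
  C (1 / 2) * ∑ i : Fin n, X i ^ 2

/-!
For `Q` homogeneous of degree `k`, the product rule and Euler's identity give
`Δ(ρQ) = (n + 2k) Q + ρ ΔQ`. Applied to the harmonic polynomial `Q = ΔP` of degree `d - 2`
this reads `Δ(ρ ΔP) = (2d + n - 4) ΔP`, which is exactly the correction term in `P†`.
-/

variable {n : ℕ}

lemma lapP_zero : lapP (0 : MvPolynomial (Fin n) ℂ) = 0 := by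
  simp [lapP]

lemma lapP_sub (P Q : MvPolynomial (Fin n) ℂ) : lapP (P - Q) = lapP P - lapP Q := by
  simp [lapP, Finset.sum_sub_distrib]

lemma lapP_C_mul (a : ℂ) (P : MvPolynomial (Fin n) ℂ) : lapP (C a * P) = C a * lapP P := by
  simp [lapP, Finset.mul_sum]

lemma MvPolynomial.IsHomogeneous.lapP {d : ℕ} {P : MvPolynomial (Fin n) ℂ}
    (h : P.IsHomogeneous d) : (lapP P).IsHomogeneous (d - 2) :=
  IsHomogeneous.sum _ _ _ fun _ _ => h.pderiv.pderiv

lemma pderiv_eq_zero_of_isHomogeneous_zero {σ R : Type*} [CommSemiring R]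
    {P : MvPolynomial σ R} (h : P.IsHomogeneous 0) (i : σ) : pderiv i P = 0 := by
  rw [← totalDegree_zero_iff_isHomogeneous, totalDegree_eq_zero_iff_eq_C] at h
  rw [h, pderiv_C]

lemma lapP_eq_zero_of_isHomogeneous_of_lt_two {d : ℕ} {P : MvPolynomial (Fin n) ℂ}
    (h : P.IsHomogeneous d) (hd : d < 2) : lapP P = 0 := by
  have h₀ : ∀ j, (pderiv j P).IsHomogeneous 0 := fun j => by
    simpa [Nat.sub_eq_zero_of_le (Nat.le_of_lt_succ hd)] using h.pderiv
  simp [lapP, pderiv_eq_zero_of_isHomogeneous_zero (h₀ _)]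

lemma pderiv_rhoP (j : Fin n) : pderiv j (rhoP n) = X j := by
  have hsq : ∀ i : Fin n, pderiv j (X i ^ 2 : MvPolynomial (Fin n) ℂ) =
      if i = j then 2 * X j else 0 := fun i => by
    rcases eq_or_ne i j with rfl | h
    · simp
    · simp [pderiv_X_of_ne h, h]
  rw [rhoP, pderiv_C_mul, map_sum, Finset.sum_congr rfl fun i _ => hsq i,
    Finset.sum_ite_eq' _ j, if_pos (Finset.mem_univ j), ← mul_assoc, ← map_ofNat C 2, ← C_mul]
  norm_num

lemma lapP_rhoP_mul (Q : MvPolynomial (Fin n) ℂ) :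
    lapP (rhoP n * Q) = n • Q + 2 • ∑ j : Fin n, X j * pderiv j Q + rhoP n * lapP Q := by
  have hj : ∀ j : Fin n, pderiv j (pderiv j (rhoP n * Q))
      = Q + 2 • (X j * pderiv j Q) + rhoP n * pderiv j (pderiv j Q) := fun j => by
    simp only [pderiv_mul, pderiv_rhoP, map_add, pderiv_X_self, two_smul]
    ring
  rw [lapP, Finset.sum_congr rfl fun j _ => hj j, Finset.sum_add_distrib, Finset.sum_add_distrib,
    ← Finset.mul_sum, ← Finset.smul_sum, Finset.sum_const, Finset.card_univ, Fintype.card_fin, lapP]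

lemma lapP_rhoP_mul_of_isHomogeneous {k : ℕ} {Q : MvPolynomial (Fin n) ℂ}
    (hQ : Q.IsHomogeneous k) (hharm : lapP Q = 0) :
    lapP (rhoP n * Q) = C ((n + 2 * k : ℕ) : ℂ) * Q := by
  rw [lapP_rhoP_mul, hQ.sum_X_mul_pderiv, hharm, mul_zero, add_zero, smul_smul, ← add_smul,
    nsmul_eq_mul, C_eq_coe_nat]

/-- If `P` is homogeneous of degree `d` with `Δ²P = 0` and `2d + n - 4 ≠ 0`, then
`P† = P - (ρ/(2d+n-4))·ΔP` is harmonic. -/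
theorem dagger_is_harmonic (n d : ℕ) (P : MvPolynomial (Fin n) ℂ)
    (hhom : P.IsHomogeneous d) (hbih : lapP (lapP P) = 0)
    (hden : (2 * (d : ℂ) + (n : ℂ)) - 4 ≠ 0) :
    lapP (P - C (1 / (2 * (d : ℂ) + (n : ℂ) - 4)) * rhoP n * lapP P) = 0 := by
  rw [mul_assoc, lapP_sub, lapP_C_mul]
  rcases lt_or_ge d 2 with hd | hd
  · rw [lapP_eq_zero_of_isHomogeneous_of_lt_two hhom hd, mul_zero, lapP_zero, mul_zero, sub_zero]
  have hcoeff : ((n + 2 * (d - 2) : ℕ) : ℂ) = 2 * (d : ℂ) + (n : ℂ) - 4 := by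
    push_cast [Nat.cast_sub hd]
    ring
  rw [lapP_rhoP_mul_of_isHomogeneous hhom.lapP hbih, hcoeff, ← mul_assoc, ← C_mul, one_div,
    inv_mul_cancel₀ hden, C_1, one_mul, sub_self]
end
end

section
/- Define π on the generators X_{i,j} of g = o(p,q)⊗ℂ by: π(X_{i,j}) = x_i∂_{x_j} - x_j∂_{x_i} if i,j ∈ [p]; π(X_{i,j}) = -y_{i-p}∂_{y_{j-p}} + y_{j-p}∂_{y_{i-p}} if i,j ∈ p+[q]; π(X_{i,j}) = -√-1(x_i y_{j-p} + ∂_{x_i}∂_{y_{j-p}}) if i ∈ [p], j ∈ p+[q]; and π(X_{i,j}) = √-1(x_j y_{i-p} + ∂_{x_j}∂_{y_{i-p}}) if i ∈ p+[q], j ∈ [p]. Then π preserves Lie brackets: π([X_{i,j}, X_{k,l}]) = [π(X_{i,j}), π(X_{k,l})] for all i,j,k,l, so π extends to a representation of g by polynomial coefficient differential operators. -/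
open MvPolynomial Matrix

noncomputable section

abbrev PolyPQ (p q : ℕ) := MvPolynomial (Fin p ⊕ Fin q) ℂ

noncomputable def mulOp {p q : ℕ} (f : PolyPQ p q) : Module.End ℂ (PolyPQ p q) :=
  LinearMap.mulLeft ℂ f

noncomputable def DOp {p q : ℕ} (i : Fin p ⊕ Fin q) : Module.End ℂ (PolyPQ p q) :=
  (pderiv i).toLinearMap

/-- The variable (x or y) corresponding to an index in {1,…,p+q}. -/
def idx (p q : ℕ) (i : Fin (p + q)) : Fin p ⊕ Fin q :=
  if h : (i : ℕ) < p then Sum.inl ⟨i, h⟩ else Sum.inr ⟨(i : ℕ) - p, by omega⟩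

/-- π on the generators X_{i,j} (the oscillator-type representation). -/
noncomputable def piGen (p q : ℕ) (i j : Fin (p + q)) : Module.End ℂ (PolyPQ p q) :=
  if (i : ℕ) < p then
    if (j : ℕ) < p then
      mulOp (X (idx p q i)) * DOp (idx p q j) - mulOp (X (idx p q j)) * DOp (idx p q i)
    else
      -Complex.I • (mulOp (X (idx p q i)) * mulOp (X (idx p q j)) +
        DOp (idx p q i) * DOp (idx p q j))
  else
    if (j : ℕ) < p then
      Complex.I • (mulOp (X (idx p q j)) * mulOp (X (idx p q i)) +
        DOp (idx p q j) * DOp (idx p q i))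
    else
      mulOp (X (idx p q j)) * DOp (idx p q i) - mulOp (X (idx p q i)) * DOp (idx p q j)

/-- ε_i = 1 if i ≤ p, -1 otherwise. -/
def eps (p q : ℕ) (i : Fin (p + q)) : ℂ := if (i : ℕ) < p then 1 else -1

/-- X_{i,j} = ε_j E_{i,j} - ε_i E_{j,i}. -/
noncomputable def Xgen (p q : ℕ) (i j : Fin (p + q)) : Matrix (Fin (p + q)) (Fin (p + q)) ℂ :=
  eps p q j • Matrix.single i j 1 - eps p q i • Matrix.single j i 1

/-- The linear extension of π to matrices in g, using the basis expansion
A = Σ_{i<j} (ε_j A_{i,j}) X_{i,j}. -/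
noncomputable def piMat (p q : ℕ) (A : Matrix (Fin (p + q)) (Fin (p + q)) ℂ) :
    Module.End ℂ (PolyPQ p q) :=
  ∑ i : Fin (p + q), ∑ j : Fin (p + q),
    if i < j then (eps p q j * A i j) • piGen p q i j else 0

/-!
Write `π(X_{i,j}) = ε_j E_{i,j} - ε_i E_{j,i}` with `E_{a,b} = U_a V_b`, where the `U`'s commute,
the `V`'s commute and `[V_a, U_b] = δ_{a,b}`: take `(U, V) = (x, ∂_x)` on the `x`-variables and
`(√-1 ∂_y, √-1 y)` on the `y`-variables. Such products satisfy the commutation relations of the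
matrix units `E_{a,b}` of `gl`, and the bracket of two `ε`-skew combinations of any family with
these relations is a fixed linear combination of such combinations. The identity therefore
holds in `gl_{p+q}` and in the Weyl algebra by the same computation, and `piMat` is linear.
-/

section GlRelations

variable {R A ι : Type*} [CommRing R] [Ring A] [Algebra R A] [DecidableEq ι]

def GlRelations (e : ι → ι → A) : Prop :=
  ∀ a b c d, e a b * e c d - e c d * e a b =
    (if b = c then e a d else 0) - (if a = d then e c b else 0)

def orthoGen (ε : ι → R) (e : ι → ι → A) (i j : ι) : A :=
  ε j • e i j - ε i • e j i

omit [DecidableEq ι] in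
lemma orthoGen_self (ε : ι → R) (e : ι → ι → A) (i : ι) : orthoGen ε e i i = 0 :=
  sub_self _

omit [DecidableEq ι] in
lemma orthoGen_swap (ε : ι → R) (e : ι → ι → A) (i j : ι) :
    orthoGen ε e j i = -orthoGen ε e i j :=
  (neg_sub _ _).symm

namespace GlRelations

variable {e : ι → ι → A}

lemma mul_eq (he : GlRelations e) (a b c d : ι) :
    e a b * e c d =
      e c d * e a b + (if b = c then e a d else 0) - (if a = d then e c b else 0) := by
  rw [add_sub_assoc, ← he, add_sub_cancel]

lemma comp {κ : Type*} [DecidableEq κ] (he : GlRelations e) {f : κ → ι}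
    (hf : Function.Injective f) : GlRelations fun a b => e (f a) (f b) := by
  intro a b c d
  simpa only [hf.eq_iff] using he (f a) (f b) (f c) (f d)

lemma orthoGen_commutator (he : GlRelations e) (ε : ι → R) (i j k l : ι) :
    orthoGen ε e i j * orthoGen ε e k l - orthoGen ε e k l * orthoGen ε e i j =
      (if j = k then ε j • orthoGen ε e i l else 0) + (if i = l then ε i • orthoGen ε e j k else 0)
        - (if j = l then ε j • orthoGen ε e i k else 0)
        - (if i = k then ε i • orthoGen ε e j l else 0) := by
  simp only [orthoGen, sub_mul, mul_sub, smul_mul_assoc, mul_smul_comm]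
  rw [he.mul_eq i j k l, he.mul_eq i j l k, he.mul_eq j i k l, he.mul_eq j i l k]
  split_ifs <;> subst_vars <;> module

end GlRelations

lemma glRelations_single {n : Type*} [Fintype n] [DecidableEq n] :
    GlRelations fun a b : n => Matrix.single a b (1 : R) := by
  have hmul : ∀ a b c d : n, Matrix.single a b (1 : R) * Matrix.single c d 1 =
      if b = c then Matrix.single a d 1 else 0 := by
    intro a b c d
    split_ifs with h
    · rw [h, Matrix.single_mul_single_same, one_mul]
    · exact Matrix.single_mul_single_of_ne (h := h) ..
  intro a b c d
  simp only [hmul, @eq_comm _ d a]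

lemma glRelations_mul_of_ccr {U V : ι → A} (hU : ∀ a b, Commute (U a) (U b))
    (hV : ∀ a b, Commute (V a) (V b))
    (hVU : ∀ a b, V a * U b - U b * V a = if a = b then 1 else 0) :
    GlRelations fun a b => U a * V b := by
  intro a b c d
  have hbc : V b * U c = U c * V b + if b = c then 1 else 0 := by rw [← hVU, add_sub_cancel]
  have hda : V d * U a = U a * V d + if a = d then 1 else 0 := by
    rw [← sub_eq_iff_eq_add', hVU]
    simp only [@eq_comm _ d a]
  calc U a * V b * (U c * V d) - U c * V d * (U a * V b)
      = U a * (V b * U c) * V d - U c * (V d * U a) * V b := by simp only [mul_assoc]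
    _ = U a * U c * (V b * V d) - U c * U a * (V d * V b)
          + (if b = c then U a * V d else 0) - (if a = d then U c * V b else 0) := by
        rw [hbc, hda]; split_ifs <;> noncomm_ring
    _ = _ := by rw [(hU a c).eq, (hV b d).eq, sub_self, zero_add]

end GlRelations

lemma MvPolynomial.pderiv_comm {σ R : Type*} [CommRing R] (i j : σ) (f : MvPolynomial σ R) :
    pderiv i (pderiv j f) = pderiv j (pderiv i f) := by
  have : ⁅pderiv i, pderiv j⁆ = (0 : Derivation R (MvPolynomial σ R) (MvPolynomial σ R)) :=
    derivation_ext fun k => by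
      classical rw [Derivation.commutator_apply]; simp [pderiv_X, Pi.single_apply, apply_ite]
  have hf := congr($this f)
  rwa [Derivation.commutator_apply, Derivation.zero_apply, sub_eq_zero] at hf

section WeylOperators

variable {p q : ℕ}

lemma commute_mulOp (f g : PolyPQ p q) : Commute (mulOp f) (mulOp g) :=
  LinearMap.ext fun h => by simp only [mulOp, Module.End.mul_apply, LinearMap.mulLeft_apply]; ring

lemma commute_DOp (i j : Fin p ⊕ Fin q) : Commute (DOp (p := p) i) (DOp j) :=
  LinearMap.ext fun f => pderiv_comm i j f

lemma DOp_mul_mulOp_X_sub (i j : Fin p ⊕ Fin q) :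
    DOp i * mulOp (X j) - mulOp (X j) * DOp i =
      if i = j then 1 else (0 : Module.End ℂ (PolyPQ p q)) := by
  refine LinearMap.ext fun f => ?_
  simp only [DOp, mulOp, LinearMap.sub_apply, Module.End.mul_apply, LinearMap.mulLeft_apply,
    Derivation.coeFn_coe, pderiv_mul, pderiv_X]
  split_ifs with h <;> simp [h]

lemma commute_DOp_mulOp_X {i j : Fin p ⊕ Fin q} (h : i ≠ j) :
    Commute (DOp i) (mulOp (X j) : Module.End ℂ (PolyPQ p q)) :=
  sub_eq_zero.mp ((DOp_mul_mulOp_X_sub i j).trans (if_neg h))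

lemma mulOp_X_mul_DOp_sub_comm (a b : Fin p ⊕ Fin q) :
    mulOp (X b) * DOp a - mulOp (X a) * DOp b =
      (DOp a * mulOp (X b) - DOp b * mulOp (X a) : Module.End ℂ (PolyPQ p q)) := by
  obtain rfl | h := eq_or_ne a b
  · simp only [sub_self]
  · rw [(commute_DOp_mulOp_X h).eq, (commute_DOp_mulOp_X h.symm).eq]

-- `y` and `∂_y` are swapped and rescaled by `√-1` so that `[weylV a, weylU b] = δ_{a,b}` holds
-- for the `y`-variables as well.
def weylU : Fin p ⊕ Fin q → Module.End ℂ (PolyPQ p q)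
  | .inl a => mulOp (X (.inl a))
  | .inr b => Complex.I • DOp (.inr b)

def weylV : Fin p ⊕ Fin q → Module.End ℂ (PolyPQ p q)
  | .inl a => DOp (.inl a)
  | .inr b => Complex.I • mulOp (X (.inr b))

lemma commute_weylU (a b : Fin p ⊕ Fin q) : Commute (weylU a) (weylU b) := by
  cases a <;> cases b
  · exact commute_mulOp _ _
  · exact ((commute_DOp_mulOp_X Sum.inr_ne_inl).symm).smul_right _
  · exact (commute_DOp_mulOp_X Sum.inr_ne_inl).smul_left _
  · exact ((commute_DOp _ _).smul_left _).smul_right _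

lemma commute_weylV (a b : Fin p ⊕ Fin q) : Commute (weylV a) (weylV b) := by
  cases a <;> cases b
  · exact commute_DOp _ _
  · exact (commute_DOp_mulOp_X Sum.inl_ne_inr).smul_right _
  · exact ((commute_DOp_mulOp_X Sum.inl_ne_inr).symm).smul_left _
  · exact ((commute_mulOp _ _).smul_left _).smul_right _

lemma weylV_mul_weylU_sub (a b : Fin p ⊕ Fin q) :
    weylV a * weylU b - weylU b * weylV a = if a = b then 1 else 0 := by
  cases a <;> cases b
  · exact DOp_mul_mulOp_X_sub _ _
  · simp [weylU, weylV, (commute_DOp _ _).eq]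
  · simp [weylU, weylV, (commute_mulOp _ _).eq]
  · rename_i a b
    calc weylV (.inr a) * weylU (.inr b) - weylU (.inr b) * weylV (.inr a)
        = DOp (.inr b) * mulOp (X (.inr a)) - mulOp (X (.inr a)) * DOp (.inr b) := by
          simp only [weylU, weylV, smul_mul_smul, Complex.I_mul_I]; module
      _ = _ := by simp [DOp_mul_mulOp_X_sub, eq_comm]

lemma glRelations_weyl : GlRelations fun a b : Fin p ⊕ Fin q => weylU a * weylV b :=
  glRelations_mul_of_ccr commute_weylU commute_weylV weylV_mul_weylU_sub

end WeylOperators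

section Representation

variable {p q : ℕ}

lemma idx_injective : Function.Injective (idx p q) := by
  intro i j h
  unfold idx at h
  split_ifs at h <;> simp only [Sum.inl.injEq, Sum.inr.injEq, Fin.ext_iff] at h <;>
    omega

lemma piGen_eq_orthoGen (i j : Fin (p + q)) :
    piGen p q i j = orthoGen (eps p q) (fun a b => weylU (idx p q a) * weylV (idx p q b)) i j := by
  unfold piGen orthoGen eps
  split_ifs with hi hj hj
  all_goals simp only [idx, hi, hj, dif_pos, dif_neg, not_false_eq_true, weylU, weylV]
  · simp only [one_smul]
  · rw [(commute_DOp _ _).eq]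
    simp only [smul_mul_assoc, mul_smul_comm]
    module
  · rw [(commute_DOp _ _).eq]
    simp only [smul_mul_assoc, mul_smul_comm]
    module
  · rw [mulOp_X_mul_DOp_sub_comm]
    simp only [smul_mul_smul, Complex.I_mul_I]
    module

lemma piGen_self (i : Fin (p + q)) : piGen p q i i = 0 := by
  rw [piGen_eq_orthoGen, orthoGen_self]

lemma piGen_swap (i j : Fin (p + q)) : piGen p q j i = -piGen p q i j := by
  rw [piGen_eq_orthoGen, piGen_eq_orthoGen, orthoGen_swap]

lemma eps_mul_self (i : Fin (p + q)) : eps p q i * eps p q i = 1 := by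
  unfold eps; split_ifs <;> norm_num

@[simps]
def piMatₗ (p q : ℕ) :
    Matrix (Fin (p + q)) (Fin (p + q)) ℂ →ₗ[ℂ] Module.End ℂ (PolyPQ p q) where
  toFun := piMat p q
  map_add' A B := by
    simp only [piMat, Matrix.add_apply, mul_add, add_smul, ← Finset.sum_add_distrib, ite_add_zero]
  map_smul' c A := by
    simp only [piMat, Matrix.smul_apply, Finset.smul_sum, smul_ite, smul_zero, smul_smul,
      smul_eq_mul, RingHom.id_apply, mul_left_comm c]

lemma piMat_single (i j : Fin (p + q)) (c : ℂ) :
    piMat p q (Matrix.single i j c) = if i < j then (eps p q j * c) • piGen p q i j else 0 := by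
  rw [piMat, Finset.sum_eq_single i, Finset.sum_eq_single j]
  · simp
  · intro b _ hb
    simp [Matrix.single_apply_of_col_ne _ _ (Ne.symm hb)]
  · simp
  · intro a _ ha
    simp [Matrix.single_apply_of_row_ne (Ne.symm ha)]
  · simp

lemma Xgen_eq_orthoGen (i j : Fin (p + q)) :
    Xgen p q i j = orthoGen (eps p q) (fun a b => Matrix.single a b 1) i j :=
  rfl

lemma piMat_Xgen (i j : Fin (p + q)) : piMat p q (Xgen p q i j) = piGen p q i j := by
  rw [← piMatₗ_apply, Xgen, map_sub, map_smul, map_smul, piMatₗ_apply, piMatₗ_apply,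
    piMat_single, piMat_single]
  rcases lt_trichotomy i j with h | rfl | h
  · simp [h, h.not_gt, smul_smul, eps_mul_self]
  · simp [piGen_self]
  · simp [h, h.not_gt, smul_smul, eps_mul_self, piGen_swap i j]

end Representation

/-- π preserves Lie brackets on the generators, so it extends to a representation of g. -/
theorem piGen_bracket (p q : ℕ) :
    ∀ i j k l : Fin (p + q),
      piMat p q (Xgen p q i j * Xgen p q k l - Xgen p q k l * Xgen p q i j) =
        piGen p q i j * piGen p q k l - piGen p q k l * piGen p q i j := by
  intro i j k l
  have hX := (glRelations_single (R := ℂ)).orthoGen_commutator (eps p q) i j k l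
  have hπ := (glRelations_weyl.comp idx_injective).orthoGen_commutator (eps p q) i j k l
  simp only [← Xgen_eq_orthoGen] at hX
  simp only [← piGen_eq_orthoGen] at hπ
  rw [← piMatₗ_apply, hX, hπ]
  simp only [map_sub, map_add, apply_ite (piMatₗ p q), map_smul, map_zero, piMatₗ_apply, piMat_Xgen]

end
end
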